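/- Let n₁ ≥ 1 and K = 0, let (λ₁,…,λ_{n₁}, μ₁,…,μ_{n₁}) be a real-analytic solution of the system (ODE) on an open interval I with τ not identically zero, and suppose there are real-analytic functions φ, ψ on I with μᵢ = φλᵢ + ψ for all i. Then φ is not a constant function on I. -/

import Mathlib

/-!
Differentiating `μᵢ = c λᵢ + ψ` along the system gives
`λᵢ (c ψ - (1 + c²) τ / 2) = ψ' + c τ ψ / 2 - ψ²` for every `i`. Near a point where two of the `λᵢ`
differ, the bracket therefore vanishes; then `ψ' + c τ ψ / 2 = ψ²`, and differentiating
`c ψ = (1 + c²) τ / 2` yields `4 c² Σ λᵢ² + τ² (6 c² + n₁ (1 + c²)) = 0`, so `τ = 0` there.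
Hence on the open set where `τ ≠ 0` all `λᵢ` agree with one function `ℓ` and all `μᵢ` with one
function `m`, and the third equation becomes `ℓ ((n₁ + 3)(6 - 2 n₁) m² - 2 n₁ (n₁ + 6) ℓ²) = 0`.
Where `ℓ ≠ 0` the bracket vanishes, and differentiating it gives `ℓ² m = 0`, which together with
the bracket forces `ℓ = 0`; so `τ = (2 n₁ / 3) ℓ` cannot be nonzero anywhere.
-/

open Filter Topology

lemma hasDerivAt_tau {n₁ : ℕ} {lam : Fin n₁ → ℝ → ℝ} {tau : ℝ → ℝ} {d : Fin n₁ → ℝ} {t : ℝ}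
    (htau : ∀ s, tau s = 2 / 3 * ∑ i, lam i s) (hlam : ∀ i, HasDerivAt (lam i) (d i) t) :
    HasDerivAt tau (2 / 3 * ∑ i, d i) t := by
  rw [show tau = fun s => 2 / 3 * ∑ i, lam i s from funext htau]
  exact (HasDerivAt.fun_sum fun i _ => hlam i).const_mul _

lemma lam_mul_eq_of_linear_relation {lam mu psi tau : ℝ → ℝ} {c ψ' t : ℝ}
    (hlam : HasDerivAt lam ((tau t / 2 + lam t) * mu t) t)
    (hmu : HasDerivAt mu (mu t ^ 2 - tau t / 2 * lam t) t)
    (hpsi : HasDerivAt psi ψ' t) (hlin : mu =ᶠ[𝓝 t] fun s => c * lam s + psi s) :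
    lam t * (c * psi t - (1 + c ^ 2) / 2 * tau t) = ψ' + c * (tau t / 2) * psi t - psi t ^ 2 := by
  have h := (hmu.congr_of_eventuallyEq hlin.symm).unique ((hlam.const_mul c).add hpsi)
  rw [hlin.eq_of_nhds] at h
  linear_combination h

lemma tau_eq_zero_of_psi_relations {n₁ : ℕ} (hn : 0 < n₁) (lam : Fin n₁ → ℝ) {tau psi ψ' τ' c : ℝ}
    (htau : tau = 2 / 3 * ∑ i, lam i) (hA : c * psi = (1 + c ^ 2) / 2 * tau)
    (hB : ψ' + c * (tau / 2) * psi = psi ^ 2)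
    (hτ' : τ' = 2 / 3 * ∑ i, (tau / 2 + lam i) * (c * lam i + psi))
    (hD : c * ψ' = (1 + c ^ 2) / 2 * τ') : tau = 0 := by
  have hexpand : ∑ i, (tau / 2 + lam i) * (c * lam i + psi)
      = c * ∑ i, lam i ^ 2 + (psi + c * (tau / 2)) * ∑ i, lam i + n₁ * (tau / 2 * psi) := by
    simp only [show ∀ i, (tau / 2 + lam i) * (c * lam i + psi)
        = c * lam i ^ 2 + (psi + c * (tau / 2)) * lam i + tau / 2 * psi from fun i => by ring,
      Finset.sum_add_distrib, ← Finset.mul_sum, Finset.sum_const, Finset.card_univ,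
      Fintype.card_fin, nsmul_eq_mul]
    ring
  have hsum : ∑ i, lam i = 3 / 2 * tau := by rw [htau]; ring
  have hsq : 0 ≤ ∑ i, lam i ^ 2 := Finset.sum_nonneg fun i _ => sq_nonneg _
  have hn' : (1 : ℝ) ≤ n₁ := by exact_mod_cast hn
  have hkey : (1 + c ^ 2) * (4 * c ^ 2 * ∑ i, lam i ^ 2
      + tau ^ 2 * (6 * c ^ 2 + n₁ * (1 + c ^ 2))) = 0 := by
    rw [hτ', hexpand, hsum] at hD
    linear_combination 12 * c ^ 2 * hB - 12 * c * hD
      + 12 * (c * psi - c ^ 2 * tau / 2 - (n₁ / 3) * ((1 + c ^ 2) / 2) * tau) * hA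
  have hinner := (mul_eq_zero.mp hkey).resolve_left (by positivity)
  have : tau ^ 2 ≤ 0 := by
    nlinarith [mul_nonneg (sq_nonneg c) hsq, mul_nonneg (sq_nonneg tau) (sq_nonneg c),
      mul_nonneg (sub_nonneg.2 hn') (sq_nonneg tau),
      mul_nonneg (mul_nonneg (Nat.cast_nonneg n₁) (sq_nonneg tau)) (sq_nonneg c)]
  exact pow_eq_zero_iff two_ne_zero |>.mp (le_antisymm this (sq_nonneg tau))

lemma tau_eq_zero_of_lam_ne {n₁ : ℕ} {I : Set ℝ} {lam mu : Fin n₁ → ℝ → ℝ} {tau psi : ℝ → ℝ}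
    {c t : ℝ} (hI : IsOpen I) (htau : ∀ s, tau s = 2 / 3 * ∑ i, lam i s)
    (hode1 : ∀ i, ∀ s ∈ I, HasDerivAt (lam i) ((tau s / 2 + lam i s) * mu i s) s)
    (hode2 : ∀ i, ∀ s ∈ I, HasDerivAt (mu i) (mu i s ^ 2 - tau s / 2 * lam i s) s)
    (hlin : ∀ i, ∀ s ∈ I, mu i s = c * lam i s + psi s)
    (ht : t ∈ I) {j k : Fin n₁} (hjk : lam j t ≠ lam k t) : tau t = 0 := by
  have hlin_nhds : ∀ i, ∀ s ∈ I, mu i =ᶠ[𝓝 s] fun x => c * lam i x + psi x := fun i s hs =>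
    eventually_of_mem (hI.mem_nhds hs) (hlin i)
  have hpsi : ∀ s ∈ I, HasDerivAt psi (deriv psi s) s := fun s hs =>
    (((hode2 j s hs).sub ((hode1 j s hs).const_mul c)).congr_of_eventuallyEq
      (by filter_upwards [hlin_nhds j s hs] with x hx; simp [hx])).differentiableAt.hasDerivAt
  have hkey : ∀ i, ∀ s ∈ I, lam i s * (c * psi s - (1 + c ^ 2) / 2 * tau s)
      = deriv psi s + c * (tau s / 2) * psi s - psi s ^ 2 := fun i s hs =>
    lam_mul_eq_of_linear_relation (hode1 i s hs) (hode2 i s hs) (hpsi s hs) (hlin_nhds i s hs)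
  have hA : (fun s => c * psi s) =ᶠ[𝓝 t] fun s => (1 + c ^ 2) / 2 * tau s := by
    filter_upwards [hI.mem_nhds ht, ((hode1 j t ht).continuousAt.sub
      (hode1 k t ht).continuousAt).eventually_ne (sub_ne_zero.2 hjk)] with s hs hne
    have : (lam j s - lam k s) * (c * psi s - (1 + c ^ 2) / 2 * tau s) = 0 := by
      linear_combination hkey j s hs - hkey k s hs
    linear_combination (mul_eq_zero.mp this).resolve_left hne
  have hD : c * deriv psi t = (1 + c ^ 2) / 2 * (2 / 3 * ∑ i, (tau t / 2 + lam i t) * mu i t) :=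
    ((hpsi t ht).const_mul c).unique
      (((hasDerivAt_tau htau fun i => hode1 i t ht).const_mul _).congr_of_eventuallyEq hA)
  refine tau_eq_zero_of_psi_relations j.pos (fun i => lam i t) (htau t) hA.eq_of_nhds ?_ ?_ hD
  · linear_combination hA.eq_of_nhds * lam j t - hkey j t ht
  · simp only [hlin _ t ht]

lemma eq_zero_of_reduced_system {ℓ m : ℝ → ℝ} {n t : ℝ} (hn : 0 < n)
    (hℓ : HasDerivAt ℓ ((1 + n / 3) * ℓ t * m t) t)
    (hm : HasDerivAt m (m t ^ 2 - n / 3 * ℓ t ^ 2) t)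
    (h : ∀ᶠ s in 𝓝 t, ℓ s * ((n + 3) * (6 - 2 * n) * m s ^ 2 - 2 * n * (n + 6) * ℓ s ^ 2) = 0) :
    ℓ t = 0 := by
  by_contra hℓt
  have hF : (fun s => (n + 3) * (6 - 2 * n) * m s ^ 2 - 2 * n * (n + 6) * ℓ s ^ 2)
      =ᶠ[𝓝 t] fun _ => 0 := by
    filter_upwards [h, hℓ.continuousAt.eventually_ne hℓt] with s hs hne
    exact (mul_eq_zero.mp hs).resolve_left hne
  have hF' := (((hm.fun_pow 2).const_mul ((n + 3) * (6 - 2 * n))).fun_sub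
    ((hℓ.fun_pow 2).const_mul (2 * n * (n + 6)))).unique
      ((hasDerivAt_const t (0 : ℝ)).congr_of_eventuallyEq hF)
  have hF₀ : (n + 3) * (6 - 2 * n) * m t ^ 2 - 2 * n * (n + 6) * ℓ t ^ 2 = 0 := hF.eq_of_nhds
  have hℓm : ℓ t ^ 2 * m t * (2 / 3 * n * (18 + 12 * n)) = 0 := by
    linear_combination 2 * m t * hF₀ - hF'
  rcases mul_eq_zero.mp ((mul_eq_zero.mp hℓm).resolve_right (by positivity)) with h | h
  · exact hℓt (pow_eq_zero_iff two_ne_zero |>.mp h)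
  · have hQ : 2 * n * (n + 6) * ℓ t ^ 2 = 0 := by rw [h] at hF₀; linear_combination -hF₀
    exact hℓt (by simpa [hn.ne', (by linarith : n + 6 ≠ 0)] using hQ)

lemma lam_eq_zero_of_eventually_all_eq {n₁ : ℕ} {I : Set ℝ} {lam mu : Fin n₁ → ℝ → ℝ}
    {tau : ℝ → ℝ} {t : ℝ} (htau : ∀ s, tau s = 2 / 3 * ∑ i, lam i s)
    (hode1 : ∀ i, ∀ s ∈ I, HasDerivAt (lam i) ((tau s / 2 + lam i s) * mu i s) s)
    (hode2 : ∀ i, ∀ s ∈ I, HasDerivAt (mu i) (mu i s ^ 2 - tau s / 2 * lam i s) s)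
    (hode3 : ∀ s ∈ I, -deriv (deriv tau) s + deriv tau s * ∑ i, mu i s
      + tau s * (tau s ^ 2 / 4 + ∑ i, lam i s ^ 2) = 0)
    (i₀ : Fin n₁) (heq : ∀ᶠ s in 𝓝 t, s ∈ I ∧ ∀ i, lam i s = lam i₀ s ∧ mu i s = mu i₀ s) :
    lam i₀ t = 0 := by
  set n : ℝ := (n₁ : ℝ)
  set good : ℝ → Prop := fun s => s ∈ I ∧ ∀ i, lam i s = lam i₀ s ∧ mu i s = mu i₀ s
  have hn : 0 < n := Nat.cast_pos.mpr i₀.pos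
  have hsum : ∀ g : Fin n₁ → ℝ, (∀ i, g i = g i₀) → ∑ i, g i = n * g i₀ := fun g hg => by
    rw [Finset.sum_eq_card_nsmul fun i _ => hg i]; simp [n]
  have hτ : ∀ s, good s → tau s = 2 * n / 3 * lam i₀ s := fun s hs => by
    rw [htau, hsum (fun i => lam i s) fun i => (hs.2 i).1]; ring
  have hℓ : ∀ s, good s → HasDerivAt (lam i₀) ((1 + n / 3) * lam i₀ s * mu i₀ s) s :=
    fun s hs => (hode1 i₀ s hs.1).congr_deriv (by rw [hτ s hs]; ring)
  have hm : ∀ s, good s → HasDerivAt (mu i₀) (mu i₀ s ^ 2 - n / 3 * lam i₀ s ^ 2) s :=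
    fun s hs => (hode2 i₀ s hs.1).congr_deriv (by rw [hτ s hs]; ring)
  have hd : ∀ s, good s → deriv tau s = 2 * n / 3 * (1 + n / 3) * (lam i₀ s * mu i₀ s) := by
    intro s hs
    rw [(hasDerivAt_tau htau fun i => hode1 i s hs.1).deriv,
      hsum (fun i => (tau s / 2 + lam i s) * mu i s) fun i => by rw [(hs.2 i).1, (hs.2 i).2],
      hτ s hs]
    ring
  have hdd : ∀ s, (∀ᶠ x in 𝓝 s, good x) →
      deriv (deriv tau) s = 2 * n / 3 * (1 + n / 3) * ((1 + n / 3) * lam i₀ s * mu i₀ s * mu i₀ s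
        + lam i₀ s * (mu i₀ s ^ 2 - n / 3 * lam i₀ s ^ 2)) := fun s hs =>
    ((((hℓ s hs.self_of_nhds).mul (hm s hs.self_of_nhds)).const_mul _).congr_of_eventuallyEq
      (by filter_upwards [hs] with x hx using hd x hx)).deriv
  refine eq_zero_of_reduced_system hn (hℓ t heq.self_of_nhds) (hm t heq.self_of_nhds) ?_
  filter_upwards [heq, heq.eventually_nhds] with s hs hs'
  have h3 := hode3 s hs.1
  rw [hdd s hs', hd s hs, hsum (fun i => mu i s) fun i => (hs.2 i).2,
    hsum (fun i => lam i s ^ 2) fun i => by rw [(hs.2 i).1], hτ s hs] at h3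
  have : 2 * n * (lam i₀ s * ((n + 3) * (6 - 2 * n) * mu i₀ s ^ 2
      - 2 * n * (n + 6) * lam i₀ s ^ 2)) = 0 := by
    linear_combination (-27 : ℝ) * h3
  exact (mul_eq_zero.mp this).resolve_left (by positivity)

theorem stmt_13_general (n₁ : ℕ) (K : ℝ) (hK : K = 0)
    (I : Set ℝ) (hI : IsOpen I)
    (lam mu : Fin n₁ → ℝ → ℝ)
    (tau : ℝ → ℝ) (htau : ∀ t, tau t = (2/3) * ∑ i, lam i t)
    (hode1 : ∀ i, ∀ t ∈ I, HasDerivAt (lam i) ((tau t / 2 + lam i t) * mu i t) t)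
    (hode2 : ∀ i, ∀ t ∈ I,
      HasDerivAt (mu i) ((mu i t) ^ 2 - tau t / 2 * lam i t + K) t)
    (hode3 : ∀ t ∈ I,
      -(deriv (deriv tau) t) + deriv tau t * (∑ i, mu i t)
        + tau t * ((tau t) ^ 2 / 4 - ((n₁ : ℝ) + 1) * K + ∑ i, (lam i t) ^ 2) = 0)
    (htau_ne : ¬ ∀ t ∈ I, tau t = 0)
    (phi psi : ℝ → ℝ)
    (hlin : ∀ i, ∀ t ∈ I, mu i t = phi t * lam i t + psi t) :
    ¬ ∃ c : ℝ, ∀ t ∈ I, phi t = c := by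
  subst hK
  simp only [add_zero, mul_zero, sub_zero] at hode2 hode3
  rintro ⟨c, hc⟩
  push Not at htau_ne
  obtain ⟨t₀, ht₀, hτ₀⟩ := htau_ne
  obtain ⟨i₀, -⟩ := Finset.exists_ne_zero_of_sum_ne_zero (right_ne_zero_of_mul (htau t₀ ▸ hτ₀))
  have hlin_const : ∀ i, ∀ t ∈ I, mu i t = c * lam i t + psi t := fun i t ht =>
    hc t ht ▸ hlin i t ht
  have hall_eq : ∀ᶠ s in 𝓝 t₀, s ∈ I ∧ ∀ i, lam i s = lam i₀ s ∧ mu i s = mu i₀ s := by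
    filter_upwards [hI.mem_nhds ht₀,
      (hasDerivAt_tau htau fun i => hode1 i t₀ ht₀).continuousAt.eventually_ne hτ₀] with s hs hτs
    have hlam : ∀ i, lam i s = lam i₀ s := fun i =>
      by_contra fun h => hτs (tau_eq_zero_of_lam_ne hI htau hode1 hode2 hlin_const hs h)
    exact ⟨hs, fun i => ⟨hlam i, by rw [hlin i s hs, hlin i₀ s hs, hlam i]⟩⟩
  apply hτ₀
  rw [htau, Finset.sum_congr rfl fun i _ => (hall_eq.self_of_nhds.2 i).1,
    lam_eq_zero_of_eventually_all_eq htau hode1 hode2 hode3 i₀ hall_eq]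
  simp

/-- Lemma (`vp ≠ const`): `φ` is not a constant function on `I`. -/
theorem stmt_13 (n₁ : ℕ) (hn : 1 ≤ n₁) (K : ℝ) (hK : K = 0)
    (I : Set ℝ) (hI : IsOpen I) (hIconn : I.OrdConnected)
    (lam mu : Fin n₁ → ℝ → ℝ)
    (hlam : ∀ i, AnalyticOnNhd ℝ (lam i) I)
    (hmu : ∀ i, AnalyticOnNhd ℝ (mu i) I)
    (tau : ℝ → ℝ) (htau : ∀ t, tau t = (2/3) * ∑ i, lam i t)
    (hode1 : ∀ i, ∀ t ∈ I, HasDerivAt (lam i) ((tau t / 2 + lam i t) * mu i t) t)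
    (hode2 : ∀ i, ∀ t ∈ I,
      HasDerivAt (mu i) ((mu i t) ^ 2 - tau t / 2 * lam i t + K) t)
    (hode3 : ∀ t ∈ I,
      -(deriv (deriv tau) t) + deriv tau t * (∑ i, mu i t)
        + tau t * ((tau t) ^ 2 / 4 - ((n₁ : ℝ) + 1) * K + ∑ i, (lam i t) ^ 2) = 0)
    (htau_ne : ¬ ∀ t ∈ I, tau t = 0)
    (phi psi : ℝ → ℝ)
    (hphi : AnalyticOnNhd ℝ phi I) (hpsi : AnalyticOnNhd ℝ psi I)
    (hlin : ∀ i, ∀ t ∈ I, mu i t = phi t * lam i t + psi t) :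
    ¬ ∃ c : ℝ, ∀ t ∈ I, phi t = c :=
  stmt_13_general n₁ K hK I hI lam mu tau htau hode1 hode2 hode3 htau_ne phi psi hlin
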